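/- arXiv:0709.0423 — 3 statements merged into one kernel-verified Lean document; each statement's English description precedes it below -/
import Mathlib

section
/- On T^*(ℝ_{>0} × ℝ) with coordinates (x, y, p, q), let H = (p² + q²)/x, K = q, F = yH − 2pK, and G = y²H − 4(yp − xq)K. Then {H, K} = 0, {H, F} = 0, and {H, G} = 0, i.e. K, F, G are first integrals of the Hamiltonian flow of H. -/
/-- Partial derivative in the first variable of a function of two real variables. -/
noncomputable def pd1 (f : ℝ → ℝ → ℝ) : ℝ → ℝ → ℝ :=
  fun x y => deriv (fun t => f t y) x

/-- Partial derivative in the second variable of a function of two real variables. -/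
noncomputable def pd2 (f : ℝ → ℝ → ℝ) : ℝ → ℝ → ℝ :=
  fun x y => deriv (fun t => f x t) y

/-- The canonical Poisson bracket on `T^*ℝ²` with coordinates `(x, y, p_x, p_y)`:
`{f,g} = f_{p_x} g_x + f_{p_y} g_y − f_x g_{p_x} − f_y g_{p_y}`. -/
noncomputable def pbr (F G : ℝ → ℝ → ℝ → ℝ → ℝ) (x y px py : ℝ) : ℝ :=
    deriv (fun p => F x y p py) px * deriv (fun t => G t y px py) x
  + deriv (fun p => F x y px p) py * deriv (fun t => G x t px py) y
  - deriv (fun t => F t y px py) x * deriv (fun p => G x y p py) px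
  - deriv (fun t => F x t px py) y * deriv (fun p => G x y px p) py

/-!
A direct computation: the partial derivatives of `F` and `G` follow by the product rule from
those of `H = (p² + q²)/x`, of `K = q` and of the coordinates, and once the denominator `x²` is
cleared each bracket vanishes as a polynomial identity.
-/

def HasPartialDerivsAt (f : ℝ → ℝ → ℝ → ℝ → ℝ) (fx fy fp fq x y p q : ℝ) : Prop :=
  HasDerivAt (fun t => f t y p q) fx x ∧ HasDerivAt (fun t => f x t p q) fy y ∧
    HasDerivAt (fun t => f x y t q) fp p ∧ HasDerivAt (fun t => f x y p t) fq q

namespace HasPartialDerivsAt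

variable {f g : ℝ → ℝ → ℝ → ℝ → ℝ} {fx fy fp fq gx gy gp gq x y p q : ℝ}

theorem pbr_eq (hf : HasPartialDerivsAt f fx fy fp fq x y p q)
    (hg : HasPartialDerivsAt g gx gy gp gq x y p q) :
    pbr f g x y p q = fp * gx + fq * gy - fx * gp - fy * gq := by
  rw [pbr, hf.1.deriv, hf.2.1.deriv, hf.2.2.1.deriv, hf.2.2.2.deriv, hg.1.deriv, hg.2.1.deriv,
    hg.2.2.1.deriv, hg.2.2.2.deriv]

theorem const (c : ℝ) : HasPartialDerivsAt (fun _ _ _ _ => c) 0 0 0 0 x y p q :=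
  ⟨hasDerivAt_const _ _, hasDerivAt_const _ _, hasDerivAt_const _ _, hasDerivAt_const _ _⟩

theorem coord_x : HasPartialDerivsAt (fun x _ _ _ => x) 1 0 0 0 x y p q :=
  ⟨hasDerivAt_id _, hasDerivAt_const _ _, hasDerivAt_const _ _, hasDerivAt_const _ _⟩

theorem coord_y : HasPartialDerivsAt (fun _ y _ _ => y) 0 1 0 0 x y p q :=
  ⟨hasDerivAt_const _ _, hasDerivAt_id _, hasDerivAt_const _ _, hasDerivAt_const _ _⟩

theorem coord_p : HasPartialDerivsAt (fun _ _ p _ => p) 0 0 1 0 x y p q :=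
  ⟨hasDerivAt_const _ _, hasDerivAt_const _ _, hasDerivAt_id _, hasDerivAt_const _ _⟩

theorem coord_q : HasPartialDerivsAt (fun _ _ _ q => q) 0 0 0 1 x y p q :=
  ⟨hasDerivAt_const _ _, hasDerivAt_const _ _, hasDerivAt_const _ _, hasDerivAt_id _⟩

theorem sub (hf : HasPartialDerivsAt f fx fy fp fq x y p q)
    (hg : HasPartialDerivsAt g gx gy gp gq x y p q) :
    HasPartialDerivsAt (fun x y p q => f x y p q - g x y p q)
      (fx - gx) (fy - gy) (fp - gp) (fq - gq) x y p q :=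
  ⟨hf.1.sub hg.1, hf.2.1.sub hg.2.1, hf.2.2.1.sub hg.2.2.1, hf.2.2.2.sub hg.2.2.2⟩

theorem mul (hf : HasPartialDerivsAt f fx fy fp fq x y p q)
    (hg : HasPartialDerivsAt g gx gy gp gq x y p q) :
    HasPartialDerivsAt (fun x y p q => f x y p q * g x y p q)
      (fx * g x y p q + f x y p q * gx) (fy * g x y p q + f x y p q * gy)
      (fp * g x y p q + f x y p q * gp) (fq * g x y p q + f x y p q * gq) x y p q :=
  ⟨hf.1.mul hg.1, hf.2.1.mul hg.2.1, hf.2.2.1.mul hg.2.2.1, hf.2.2.2.mul hg.2.2.2⟩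

theorem pow (hf : HasPartialDerivsAt f fx fy fp fq x y p q) (n : ℕ) :
    HasPartialDerivsAt (fun x y p q => f x y p q ^ n)
      (n * f x y p q ^ (n - 1) * fx) (n * f x y p q ^ (n - 1) * fy)
      (n * f x y p q ^ (n - 1) * fp) (n * f x y p q ^ (n - 1) * fq) x y p q :=
  ⟨hf.1.pow n, hf.2.1.pow n, hf.2.2.1.pow n, hf.2.2.2.pow n⟩

end HasPartialDerivsAt

theorem hasPartialDerivsAt_sq_add_sq_div {x : ℝ} (hx : x ≠ 0) (y p q : ℝ) :
    HasPartialDerivsAt (fun x _ p q => (p ^ 2 + q ^ 2) / x)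
      (-(p ^ 2 + q ^ 2) / x ^ 2) 0 (2 * p / x) (2 * q / x) x y p q := by
  refine ⟨?_, hasDerivAt_const _ _, ?_, ?_⟩
  · exact ((hasDerivAt_const x (p ^ 2 + q ^ 2)).div (hasDerivAt_id' x) hx).congr_deriv (by ring)
  · simpa using ((hasDerivAt_pow 2 p).add_const (q ^ 2)).div_const x
  · simpa using ((hasDerivAt_pow 2 q).const_add (p ^ 2)).div_const x

/-- for the geodesic flow of `g₀ = x(dx²+dy²)` on the half-plane
`x > 0`, the functions `K = q`, `F = yH − 2pK`, `G = y²H − 4(yp−xq)K` are first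
integrals of `H = (p²+q²)/x`. -/
theorem integrals_of_g0 :
    let H : ℝ → ℝ → ℝ → ℝ → ℝ := fun x _ p q => (p ^ 2 + q ^ 2) / x
    let K : ℝ → ℝ → ℝ → ℝ → ℝ := fun _ _ _ q => q
    let F : ℝ → ℝ → ℝ → ℝ → ℝ := fun x y p q => y * H x y p q - 2 * p * K x y p q
    let G : ℝ → ℝ → ℝ → ℝ → ℝ := fun x y p q =>
      y ^ 2 * H x y p q - 4 * (y * p - x * q) * K x y p q
    ∀ x y p q : ℝ, 0 < x →
      pbr H K x y p q = 0 ∧ pbr H F x y p q = 0 ∧ pbr H G x y p q = 0 := by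
  open HasPartialDerivsAt in
  intro H K F G x y p q hx
  have hH := hasPartialDerivsAt_sq_add_sq_div hx.ne' y p q
  have hK : HasPartialDerivsAt K 0 0 0 1 x y p q := coord_q
  have hF : HasPartialDerivsAt F _ _ _ _ x y p q :=
    (coord_y.mul hH).sub (((const 2).mul coord_p).mul hK)
  have hG : HasPartialDerivsAt G _ _ _ _ x y p q :=
    ((coord_y.pow 2).mul hH).sub
      (((const 4).mul ((coord_y.mul coord_p).sub (coord_x.mul coord_q))).mul hK)
  rw [hH.pbr_eq hK, hH.pbr_eq hF, hH.pbr_eq hG]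
  refine ⟨by ring, ?_, ?_⟩ <;> field_simp <;> ring
end

section
/- On T^*(ℝ_{>0} × ℝ) with coordinates (x, y, p, q), let H = (p² + q²)/x, K = q, F = yH − 2pK, and G = y²H − 4(yp − xq)K. Then the Poisson brackets satisfy {K, F} = H, {K, G} = 2F, and {G, F} = 16K³. -/
structure HasPartialDerivs (F : ℝ → ℝ → ℝ → ℝ → ℝ) (x y p q Fx Fy Fp Fq : ℝ) : Prop where
  hasDerivAt_x : HasDerivAt (fun t => F t y p q) Fx x
  hasDerivAt_y : HasDerivAt (fun t => F x t p q) Fy y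
  hasDerivAt_p : HasDerivAt (fun t => F x y t q) Fp p
  hasDerivAt_q : HasDerivAt (fun t => F x y p t) Fq q

theorem pbr_eq_of_hasPartialDerivs {F G : ℝ → ℝ → ℝ → ℝ → ℝ}
    {x y p q Fx Fy Fp Fq Gx Gy Gp Gq : ℝ}
    (hF : HasPartialDerivs F x y p q Fx Fy Fp Fq) (hG : HasPartialDerivs G x y p q Gx Gy Gp Gq) :
    pbr F G x y p q = Fp * Gx + Fq * Gy - Fx * Gp - Fy * Gq := by
  rw [pbr, hF.hasDerivAt_x.deriv, hF.hasDerivAt_y.deriv, hF.hasDerivAt_p.deriv,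
    hF.hasDerivAt_q.deriv, hG.hasDerivAt_x.deriv, hG.hasDerivAt_y.deriv, hG.hasDerivAt_p.deriv,
    hG.hasDerivAt_q.deriv]

theorem hasDerivAt_of_eq_quadratic {f : ℝ → ℝ} (a b c : ℝ)
    (hf : ∀ s, f s = a * s ^ 2 + b * s + c) (t : ℝ) : HasDerivAt f (2 * a * t + b) t := by
  rw [funext hf]
  exact ((((hasDerivAt_pow 2 t).const_mul a).fun_add ((hasDerivAt_id' t).const_mul b)).add_const
    c).congr_deriv (by norm_num; ring)

theorem hasDerivAt_of_eq_inv_add_linear {f : ℝ → ℝ} (a b c : ℝ)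
    (hf : ∀ s, f s = a / s + b * s + c) {t : ℝ} (ht : t ≠ 0) :
    HasDerivAt f (-a / t ^ 2 + b) t := by
  simp only [div_eq_mul_inv] at hf
  rw [funext hf]
  exact ((((hasDerivAt_inv ht).const_mul a).fun_add ((hasDerivAt_id' t).const_mul b)).add_const
    c).congr_deriv (by ring)

section

variable {x : ℝ} (y p q : ℝ)

theorem hasPartialDerivs_K : HasPartialDerivs (fun _ _ _ q => q) x y p q 0 0 0 1 :=
  ⟨hasDerivAt_const x q, hasDerivAt_const y q, hasDerivAt_const p q, hasDerivAt_id q⟩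

theorem hasPartialDerivs_F (hx : x ≠ 0) :
    HasPartialDerivs (fun x y p q => y * ((p ^ 2 + q ^ 2) / x) - 2 * p * q) x y p q
      (-(y * (p ^ 2 + q ^ 2)) / x ^ 2) ((p ^ 2 + q ^ 2) / x) (2 * y * p / x - 2 * q)
      (2 * y * q / x - 2 * p) where
  hasDerivAt_x := (hasDerivAt_of_eq_inv_add_linear (y * (p ^ 2 + q ^ 2)) 0 (-2 * p * q)
    (fun s => by ring) hx).congr_deriv (by ring)
  hasDerivAt_y := (hasDerivAt_of_eq_quadratic 0 ((p ^ 2 + q ^ 2) / x) (-2 * p * q)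
    (fun s => by ring) y).congr_deriv (by ring)
  hasDerivAt_p := (hasDerivAt_of_eq_quadratic (y / x) (-2 * q) (y * q ^ 2 / x)
    (fun s => by ring) p).congr_deriv (by ring)
  hasDerivAt_q := (hasDerivAt_of_eq_quadratic (y / x) (-2 * p) (y * p ^ 2 / x)
    (fun s => by ring) q).congr_deriv (by ring)

theorem hasPartialDerivs_G (hx : x ≠ 0) :
    HasPartialDerivs (fun x y p q => y ^ 2 * ((p ^ 2 + q ^ 2) / x) - 4 * (y * p - x * q) * q)
      x y p q (-(y ^ 2 * (p ^ 2 + q ^ 2)) / x ^ 2 + 4 * q ^ 2)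
      (2 * y * (p ^ 2 + q ^ 2) / x - 4 * p * q) (2 * y ^ 2 * p / x - 4 * y * q)
      (2 * y ^ 2 * q / x - 4 * y * p + 8 * x * q) where
  hasDerivAt_x := hasDerivAt_of_eq_inv_add_linear (y ^ 2 * (p ^ 2 + q ^ 2)) (4 * q ^ 2)
    (-4 * y * p * q) (fun s => by ring) hx
  hasDerivAt_y := (hasDerivAt_of_eq_quadratic ((p ^ 2 + q ^ 2) / x) (-4 * p * q) (4 * x * q ^ 2)
    (fun s => by ring) y).congr_deriv (by ring)
  hasDerivAt_p := (hasDerivAt_of_eq_quadratic (y ^ 2 / x) (-4 * y * q)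
    (y ^ 2 * q ^ 2 / x + 4 * x * q ^ 2) (fun s => by ring) p).congr_deriv (by ring)
  hasDerivAt_q := (hasDerivAt_of_eq_quadratic (y ^ 2 / x + 4 * x) (-4 * y * p)
    (y ^ 2 * p ^ 2 / x) (fun s => by ring) q).congr_deriv (by ring)

end

/-- the integrals of the geodesic flow of `x(dx²+dy²)` satisfy
`{K,F} = H`, `{K,G} = 2F`, `{G,F} = 16K³`. -/
theorem bracket_relations_of_g0 :
    let H : ℝ → ℝ → ℝ → ℝ → ℝ := fun x _ p q => (p ^ 2 + q ^ 2) / x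
    let K : ℝ → ℝ → ℝ → ℝ → ℝ := fun _ _ _ q => q
    let F : ℝ → ℝ → ℝ → ℝ → ℝ := fun x y p q => y * H x y p q - 2 * p * K x y p q
    let G : ℝ → ℝ → ℝ → ℝ → ℝ := fun x y p q =>
      y ^ 2 * H x y p q - 4 * (y * p - x * q) * K x y p q
    ∀ x y p q : ℝ, 0 < x →
      pbr K F x y p q = H x y p q ∧
      pbr K G x y p q = 2 * F x y p q ∧
      pbr G F x y p q = 16 * K x y p q ^ 3 := by
  intro H K F G x y p q hx
  have hK := hasPartialDerivs_K (x := x) y p q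
  have hF := hasPartialDerivs_F y p q hx.ne'
  have hG := hasPartialDerivs_G y p q hx.ne'
  refine ⟨(pbr_eq_of_hasPartialDerivs hK hF).trans ?_,
    (pbr_eq_of_hasPartialDerivs hK hG).trans ?_, (pbr_eq_of_hasPartialDerivs hG hF).trans ?_⟩ <;>
  · simp only [H, K, F]
    field_simp
    ring
end

section
/- For the metric g = ε₁ e^{(β+2)x} dx² + ε₂ e^{βx} dy² on ℝ² (ε₁, ε₂ ∈ {±1}, β ∈ ℝ, taken on a domain where g is nondegenerate), the vector field ∂_y is a Killing field, and the squared norm of the gradient of the Gaussian curvature satisfies |∇K|²_g = (ε₁/4) e^{−3(β+2)x} β² (β+2)². In particular the curvature K is constant if and only if β = 0 or β = −2. -/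
/-- The Gaussian curvature of the metric `E dx² + 2F dxdy + G dy²` given by the
Brioschi formula, in terms of the coefficients and their first and second
partial derivatives. -/
noncomputable def brioschi (E F G : ℝ → ℝ → ℝ) : ℝ → ℝ → ℝ := fun x y =>
  (Matrix.det !![-(1/2) * pd2 (pd2 E) x y + pd2 (pd1 F) x y - (1/2) * pd1 (pd1 G) x y,
                   (1/2) * pd1 E x y, pd1 F x y - (1/2) * pd2 E x y;
                 pd2 F x y - (1/2) * pd1 G x y, E x y, F x y;
                 (1/2) * pd2 G x y, F x y, G x y]
    - Matrix.det !![0, (1/2) * pd2 E x y, (1/2) * pd1 G x y;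
                    (1/2) * pd2 E x y, E x y, F x y;
                    (1/2) * pd1 G x y, F x y, G x y])
  / (E x y * G x y - F x y ^ 2) ^ 2

/-! Both metric coefficients depend on `x` alone and `F = 0`, so the Brioschi formula collapses
to `K = (E G'² + G (E' G' - 2 E G'')) / (4 E² G²)`. For `E = ε₁ e^{(β+2)x}`, `G = ε₂ e^{βx}` the
factor `E G²` cancels and `K = β / (2ε₁) · e^{-(β+2)x}` is a single exponential in `x`: its
gradient is read off directly, and it is constant exactly when its coefficient `β / (2ε₁)` or its
rate `β + 2` vanishes. -/

open Real

lemma pd1_comp_fst (f : ℝ → ℝ) : pd1 (fun x _ => f x) = fun x _ => deriv f x := rfl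

lemma pd2_comp_fst (f : ℝ → ℝ) : pd2 (fun x _ => f x) = fun _ _ => 0 := by
  funext x y
  exact deriv_const y (f x)

lemma brioschi_diagonal_comp_fst (e g : ℝ → ℝ) :
    brioschi (fun x _ => e x) (fun _ _ => 0) (fun x _ => g x) = fun x _ =>
      (e x * deriv g x ^ 2 + g x * (deriv e x * deriv g x - 2 * e x * deriv (deriv g) x))
        / (4 * (e x * g x) ^ 2) := by
  funext x y
  simp only [brioschi, pd1, pd2, deriv_const', Matrix.det_fin_three, Matrix.of_apply,
    Matrix.cons_val', Matrix.cons_val_zero, Matrix.cons_val_one, Matrix.head_cons,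
    Matrix.cons_val_fin_one, Matrix.head_fin_const, Matrix.empty_val', Matrix.cons_val_two,
    Matrix.tail_cons]
  ring

lemma deriv_const_mul_exp_mul (c a : ℝ) :
    deriv (fun t => c * exp (a * t)) = fun t => c * a * exp (a * t) := by
  funext t
  have h := ((hasDerivAt_id t).const_mul a).exp.const_mul c
  simp only [id, mul_one] at h
  rw [h.deriv]
  ring

lemma brioschi_diagonal_exp (c₁ c₂ a b : ℝ) (hc₂ : c₂ ≠ 0) :
    brioschi (fun x _ => c₁ * exp (a * x)) (fun _ _ => 0) (fun x _ => c₂ * exp (b * x)) =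
      fun x _ => b * (a - b) / (4 * c₁) * exp (-a * x) := by
  rw [brioschi_diagonal_comp_fst, deriv_const_mul_exp_mul, deriv_const_mul_exp_mul,
    deriv_const_mul_exp_mul]
  funext x y
  rw [neg_mul, exp_neg]
  rcases eq_or_ne c₁ 0 with rfl | hc₁
  · simp
  · field_simp
    ring

lemma const_mul_exp_mul_const_iff (κ c : ℝ) :
    (∀ x x' : ℝ, κ * exp (c * x) = κ * exp (c * x')) ↔ κ = 0 ∨ c = 0 := by
  constructor
  · intro h
    have h01 := h 0 1
    simp only [mul_zero, exp_zero, mul_one] at h01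
    by_contra! hne
    have : exp c = 1 := mul_left_cancel₀ hne.1 (by rw [mul_one]; exact h01.symm)
    exact hne.2 (exp_eq_one_iff c |>.mp this)
  · rintro (rfl | rfl) x x' <;> simp

lemma sq_pd1_div_add_sq_pd2_div_of_exp (κ c c₁ a : ℝ) (G : ℝ → ℝ → ℝ) (x y : ℝ) :
    pd1 (fun x _ => κ * exp (c * x)) x y ^ 2 / (c₁ * exp (a * x))
        + pd2 (fun x _ => κ * exp (c * x)) x y ^ 2 / G x y
      = (κ * c) ^ 2 / c₁ * exp ((2 * c - a) * x) := by
  rw [pd1_comp_fst, pd2_comp_fst, deriv_const_mul_exp_mul]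
  have : exp ((2 * c - a) * x) = exp (c * x) ^ 2 / exp (a * x) := by
    rw [← exp_nat_mul, ← exp_sub]
    ring_nf
  rw [this]
  ring

/-- for `g = ε₁e^{(β+2)x}dx² + ε₂e^{βx}dy²`, the field `∂_y` is
Killing (the metric coefficients are `y`-independent), the squared norm of the
gradient of the Gaussian curvature is
`|∇K|²_g = (ε₁/4) e^{−3(β+2)x} β² (β+2)²`, and `K` is constant iff `β = 0` or
`β = −2`. -/
theorem bmm_family_invariants
    (ε₁ ε₂ β : ℝ) (h1 : ε₁ = 1 ∨ ε₁ = -1) (h2 : ε₂ = 1 ∨ ε₂ = -1) :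
    let E : ℝ → ℝ → ℝ := fun x _ => ε₁ * Real.exp ((β + 2) * x)
    let G : ℝ → ℝ → ℝ := fun x _ => ε₂ * Real.exp (β * x)
    let K : ℝ → ℝ → ℝ := brioschi E (fun _ _ => 0) G
    (∀ x y : ℝ, pd2 E x y = 0 ∧ pd2 G x y = 0) ∧
    (∀ x y : ℝ,
        pd1 K x y ^ 2 / E x y + pd2 K x y ^ 2 / G x y
          = ε₁ / 4 * Real.exp (-(3 * (β + 2) * x)) * β ^ 2 * (β + 2) ^ 2) ∧
    ((∀ x y x' y' : ℝ, K x y = K x' y') ↔ (β = 0 ∨ β = -2)) := by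
  intro E G K
  have hε₂ : ε₂ ≠ 0 := by rcases h2 with rfl | rfl <;> norm_num
  have hK : K = fun x _ => β * (β + 2 - β) / (4 * ε₁) * exp (-(β + 2) * x) :=
    brioschi_diagonal_exp ε₁ ε₂ (β + 2) β hε₂
  refine ⟨fun x y => ⟨by simp only [E, pd2_comp_fst], by simp only [G, pd2_comp_fst]⟩,
    fun x y => ?_, ?_⟩
  · rw [hK, sq_pd1_div_add_sq_pd2_div_of_exp,
      show (2 * -(β + 2) - (β + 2)) * x = -(3 * (β + 2) * x) by ring]
    rcases h1 with rfl | rfl <;> ring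
  · have hε₁ : ε₁ ≠ 0 := by rcases h1 with rfl | rfl <;> norm_num
    have hκ : β * (β + 2 - β) / (4 * ε₁) = 0 ↔ β = 0 := by
      rw [add_sub_cancel_left]
      simp [hε₁]
    simp only [hK, forall_const]
    rw [const_mul_exp_mul_const_iff, hκ, neg_eq_zero, add_eq_zero_iff_eq_neg]
end
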